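/- There exist exactly 5 complex numbers a such that the polynomial f(x,y,z) = 1 + x + y + x²·y²·z⁵ + a·x·y·z² has a singular point in (ℂ ∖ {0})³. -/

import Mathlib

/-!
At a singular point `(x, y, z)` in the torus, subtracting `y ∂_y f` from `x ∂_x f` gives `x = y`,
and then `∂_z f = x²z (5x²z³ + 2a)` gives `2a = -5x²z³`. Substituting into `∂_x f` and `f` leaves
`x³z⁵ = 2` and `x = 1`. Hence the admissible `a` are the values `-5z³/2` at the five fifth roots
`z` of `2`, and these values are distinct because `z³` and `z⁵` together determine `z`.
-/

open MvPolynomial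

noncomputable section

/-- `p` is a singular point of `h` lying in the torus `(ℂ ∖ {0})³`. -/
def SingularAt3 (h : MvPolynomial (Fin 3) ℂ) (p : Fin 3 → ℂ) : Prop :=
  (∀ i, p i ≠ 0) ∧ eval p h = 0 ∧ ∀ i : Fin 3, eval p (pderiv i h) = 0

theorem eq_of_pow_eq_pow_of_coprime {G₀ : Type*} [CommGroupWithZero G₀] {m n : ℕ}
    (hmn : m.Coprime n) {x y : G₀} (hm : x ^ m = y ^ m) (hn : x ^ n = y ^ n) : x = y := by
  rcases eq_or_ne y 0 with rfl | hy
  · obtain hm0 | hn0 : m ≠ 0 ∨ n ≠ 0 := by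
      by_contra! h
      simp [h.1, h.2] at hmn
    · simpa [hm0] using hm
    · simpa [hn0] using hn
  · have hquot : (x / y) ^ m.gcd n = 1 := pow_gcd_eq_one.2
      ⟨by rw [div_pow, hm, div_self (pow_ne_zero _ hy)],
        by rw [div_pow, hn, div_self (pow_ne_zero _ hy)]⟩
    rwa [hmn, pow_one, div_eq_one_iff_eq hy] at hquot

theorem ncard_setOf_pow_eq {n : ℕ} (hn : n ≠ 0) {a : ℂ} (ha : a ≠ 0) :
    {z : ℂ | z ^ n = a}.ncard = n := by
  classical
  have hζ := Complex.isPrimitiveRoot_exp n hn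
  have hset : {z : ℂ | z ^ n = a} = ↑(Polynomial.nthRoots n a).toFinset := by
    ext z
    simp [Polynomial.mem_nthRoots (Nat.pos_of_ne_zero hn)]
  rw [hset, Set.ncard_coe_finset, Multiset.toFinset_card_of_nodup (hζ.nthRoots_nodup ha),
    hζ.card_nthRoots, if_pos (IsAlgClosed.exists_pow_nat_eq a (Nat.pos_of_ne_zero hn))]

theorem circuit_singular_equations_iff {K : Type*} [Field K] (h2 : (2 : K) ≠ 0) {a x y z : K}
    (hx : x ≠ 0) (hz : z ≠ 0) :
    (1 + x + y + x ^ 2 * y ^ 2 * z ^ 5 + a * (x * y * z ^ 2) = 0 ∧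
      1 + z ^ 5 * (y ^ 2 * (2 * x)) + a * (z ^ 2 * y) = 0 ∧
      1 + z ^ 5 * (x ^ 2 * (2 * y)) + a * (z ^ 2 * x) = 0 ∧
      x ^ 2 * y ^ 2 * (5 * z ^ 4) + a * (x * y * (2 * z)) = 0) ↔
    x = 1 ∧ y = 1 ∧ z ^ 5 = 2 ∧ a = -5 * z ^ 3 / 2 := by
  constructor
  · rintro ⟨hf, hfx, hfy, hfz⟩
    obtain rfl : x = y := by linear_combination x * hfx - y * hfy
    have ha : 5 * x ^ 2 * z ^ 3 + 2 * a = 0 := by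
      refine mul_left_cancel₀ (mul_ne_zero (pow_ne_zero 2 hx) hz) ?_
      linear_combination hfz
    have hxz : x ^ 3 * z ^ 5 = 2 := by linear_combination -2 * hfx + x * z ^ 2 * ha
    obtain rfl : x = 1 := by
      refine (mul_left_cancel₀ h2 ?_).symm
      linear_combination 2 * hf - x ^ 2 * z ^ 2 * ha + 3 * x * hxz
    refine ⟨rfl, rfl, by simpa using hxz, ?_⟩
    rw [eq_div_iff h2]
    linear_combination ha
  · rintro ⟨rfl, rfl, hz5, rfl⟩
    field_simp
    exact ⟨by linear_combination -3 * hz5, by linear_combination -hz5,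
      by linear_combination -hz5, by ring⟩

theorem singularAt3_circuit_iff (a : ℂ) (p : Fin 3 → ℂ) :
    SingularAt3 (1 + X 0 + X 1 + X 0 ^ 2 * X 1 ^ 2 * X 2 ^ 5 + C a * (X 0 * X 1 * X 2 ^ 2)) p ↔
      p 0 = 1 ∧ p 1 = 1 ∧ p 2 ^ 5 = 2 ∧ a = -5 * p 2 ^ 3 / 2 := by
  simp only [SingularAt3, Fin.forall_fin_succ, Fin.isValue, Fin.succ_zero_eq_one,
    Fin.succ_one_eq_two, IsEmpty.forall_iff, and_true, map_add, map_one, eval_X, map_mul, map_pow,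
    eval_C, Derivation.map_one_eq_zero, pderiv_X, Pi.single_apply, zero_add, Derivation.leibniz,
    Derivation.leibniz_pow, Nat.add_one_sub_one, smul_eq_mul, mul_ite, mul_one, mul_zero, smul_ite,
    nsmul_eq_mul, Nat.cast_ofNat, pow_one, derivation_C, add_zero,
    MonoidWithZeroHom.map_ite_one_zero, ↓reduceIte, one_ne_zero, Fin.reduceEq, map_zero,
    eval_ofNat, zero_ne_one]
  constructor
  · rintro ⟨⟨hx, -, hz⟩, hf⟩
    exact (circuit_singular_equations_iff two_ne_zero hx hz).1 hf
  · intro h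
    have hx : p 0 ≠ 0 := by simp [h.1]
    have hz : p 2 ≠ 0 := ne_zero_pow (by norm_num) (h.2.2.1 ▸ two_ne_zero)
    exact ⟨⟨hx, by simp [h.2.1], hz⟩, (circuit_singular_equations_iff two_ne_zero hx hz).2 h⟩

theorem setOf_singularAt3_circuit_eq_image :
    {a : ℂ | ∃ p : Fin 3 → ℂ,
      SingularAt3 (1 + X 0 + X 1 + X 0 ^ 2 * X 1 ^ 2 * X 2 ^ 5 + C a * (X 0 * X 1 * X 2 ^ 2)) p} =
      (fun z : ℂ => -5 * z ^ 3 / 2) '' {z : ℂ | z ^ 5 = 2} := by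
  ext a
  simp only [singularAt3_circuit_iff, Set.mem_ofPred_eq, Set.mem_image]
  constructor
  · rintro ⟨p, -, -, h5, rfl⟩
    exact ⟨p 2, h5, rfl⟩
  · rintro ⟨z, h5, rfl⟩
    exact ⟨![1, 1, z], rfl, rfl, h5, rfl⟩

theorem injOn_setOf_pow_five_eq_two :
    Set.InjOn (fun z : ℂ => -5 * z ^ 3 / 2) {z : ℂ | z ^ 5 = 2} := by
  intro z hz w hw hzw
  refine eq_of_pow_eq_pow_of_coprime (m := 3) (n := 5) (by norm_num) ?_ (hz.trans hw.symm)
  simpa using hzw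

theorem circuitB_count_2_2_5 :
    {a : ℂ | ∃ p : Fin 3 → ℂ,
      SingularAt3 (1 + X 0 + X 1 + X 0 ^ 2 * X 1 ^ 2 * X 2 ^ 5 +
        C a * (X 0 * X 1 * X 2 ^ 2)) p}.ncard = 5 := by
  rw [setOf_singularAt3_circuit_eq_image, injOn_setOf_pow_five_eq_two.ncard_image,
    ncard_setOf_pow_eq (by norm_num) two_ne_zero]

end
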